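/- Let X1, X2, X3 be mutually independent random variables on a finite probability space and Y another random variable. Then I(X1, X2, X3; Y) ≤ I(X1; Y | X2, X3) + I(X2; Y | X1, X3) + I(X3; Y | X1, X2). -/
import Mathlib


open Finset

noncomputable def rvDist {Ω : Type*} [Fintype Ω] {A : Type*} [Fintype A] [DecidableEq A]
    (p : Ω → ℝ) (X : Ω → A) (a : A) : ℝ :=
  ∑ ω, if X ω = a then p ω else 0

noncomputable def rvEnt {Ω : Type*} [Fintype Ω] {A : Type*} [Fintype A] [DecidableEq A]
    (p : Ω → ℝ) (X : Ω → A) : ℝ :=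
  ∑ a, Real.negMulLog (rvDist p X a)

/-- Mutual information `I(X; Y)`. -/
noncomputable def rvMI {Ω : Type*} [Fintype Ω] {A B : Type*} [Fintype A] [DecidableEq A]
    [Fintype B] [DecidableEq B] (p : Ω → ℝ) (X : Ω → A) (Y : Ω → B) : ℝ :=
  rvEnt p X + rvEnt p Y - rvEnt p (fun ω => (X ω, Y ω))

/-- Conditional mutual information `I(X; Y | Z)`. -/
noncomputable def rvCMI {Ω : Type*} [Fintype Ω] {A B C : Type*} [Fintype A] [DecidableEq A]
    [Fintype B] [DecidableEq B] [Fintype C] [DecidableEq C]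
    (p : Ω → ℝ) (X : Ω → A) (Y : Ω → B) (Z : Ω → C) : ℝ :=
  rvEnt p (fun ω => (X ω, Z ω)) + rvEnt p (fun ω => (Y ω, Z ω))
    - rvEnt p (fun ω => (X ω, Y ω, Z ω)) - rvEnt p Z

section AuxLemmas
set_option linter.unusedSectionVars false
variable {Ω : Type*} [Fintype Ω] {A A' B C : Type*} [Fintype A] [DecidableEq A]
  [Fintype A'] [DecidableEq A'] [Fintype B] [DecidableEq B] [Fintype C] [DecidableEq C]

lemma rvDist_nonneg (p : Ω → ℝ) (hp : ∀ ω, 0 ≤ p ω) (X : Ω → A) (a : A) :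
    0 ≤ rvDist p X a :=
  Finset.sum_nonneg fun ω _ => by split <;> simp [hp ω]

lemma sum_rvDist (p : Ω → ℝ) (X : Ω → A) : ∑ a, rvDist p X a = ∑ ω, p ω := by
  unfold rvDist
  rw [Finset.sum_comm]
  simp

lemma rvDist_comp (p : Ω → ℝ) (f : A → A') (hf : Function.Injective f) (X : Ω → A) (a : A) :
    rvDist p (fun ω => f (X ω)) (f a) = rvDist p X a := by
  unfold rvDist
  congr 1; ext ω
  simp [hf.eq_iff]

lemma rvDist_marg (p : Ω → ℝ) (X : Ω → A) (T : Ω → C) (a : A) :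
    rvDist p X a = ∑ c, rvDist p (fun ω => (X ω, T ω)) (a, c) := by
  unfold rvDist
  rw [Finset.sum_comm]
  congr 1; ext ω
  simp only [Prod.mk.injEq, ite_and]
  rcases eq_or_ne (X ω) a with h | h
  · simp [h]
  · simp [h]

lemma rvEnt_comp (p : Ω → ℝ) (f : A → A') (hf : Function.Injective f) (X : Ω → A) :
    rvEnt p (fun ω => f (X ω)) = rvEnt p X := by
  unfold rvEnt
  have h1 : ∑ a', Real.negMulLog (rvDist p (fun ω => f (X ω)) a')
      = ∑ a' ∈ Finset.univ.image f, Real.negMulLog (rvDist p (fun ω => f (X ω)) a') := by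
    refine (Finset.sum_subset (Finset.subset_univ _) ?_).symm
    intro a' _ ha'
    have h0 : rvDist p (fun ω => f (X ω)) a' = 0 := by
      apply Finset.sum_eq_zero
      intro ω _
      have : f (X ω) ≠ a' := fun h => ha' (Finset.mem_image.2 ⟨X ω, Finset.mem_univ _, h⟩)
      simp [this]
    simp [h0]
  rw [h1, Finset.sum_image (by intro x _ y _ h; exact hf h)]
  exact Finset.sum_congr rfl fun a _ => by rw [rvDist_comp p f hf]

lemma sum_comm3 {α β γ M : Type*} [Fintype α] [Fintype β] [Fintype γ] [AddCommMonoid M]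
    (f : α → β → γ → M) :
    ∑ a, ∑ b, ∑ c, f a b c = ∑ c, ∑ a, ∑ b, f a b c :=
  calc ∑ a, ∑ b, ∑ c, f a b c
      = ∑ a, ∑ c, ∑ b, f a b c := Finset.sum_congr rfl fun a _ => Finset.sum_comm
    _ = ∑ c, ∑ a, ∑ b, f a b c := Finset.sum_comm

lemma rvEnt_pair_indep (p : Ω → ℝ) (hsum : ∑ ω, p ω = 1) (X : Ω → A) (Y : Ω → B)
    (h : ∀ a b, rvDist p (fun ω => (X ω, Y ω)) (a, b) = rvDist p X a * rvDist p Y b) :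
    rvEnt p (fun ω => (X ω, Y ω)) = rvEnt p X + rvEnt p Y := by
  have sX : ∑ a, rvDist p X a = 1 := by rw [sum_rvDist, hsum]
  have sY : ∑ b, rvDist p Y b = 1 := by rw [sum_rvDist, hsum]
  unfold rvEnt
  rw [Fintype.sum_prod_type]
  have step : ∀ a, ∑ b, Real.negMulLog (rvDist p (fun ω => (X ω, Y ω)) (a, b))
      = Real.negMulLog (rvDist p X a) + rvDist p X a * ∑ b, Real.negMulLog (rvDist p Y b) := by
    intro a
    simp only [h, Real.negMulLog_mul]
    rw [Finset.sum_add_distrib, ← Finset.sum_mul, ← Finset.mul_sum, sY, one_mul]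
  simp only [step]
  rw [Finset.sum_add_distrib, ← Finset.sum_mul, sX, one_mul]

lemma rvEnt_submodular (p : Ω → ℝ) (hp : ∀ ω, 0 ≤ p ω) (X : Ω → A) (Y : Ω → B) (Z : Ω → C) :
    rvEnt p (fun ω => (X ω, Y ω, Z ω)) + rvEnt p Z
      ≤ rvEnt p (fun ω => (X ω, Z ω)) + rvEnt p (fun ω => (Y ω, Z ω)) := by
  set F : A → B → C → ℝ := fun a b c => rvDist p (fun ω => (X ω, Y ω, Z ω)) (a, b, c) with hF
  set PXZ : A → C → ℝ := fun a c => rvDist p (fun ω => (X ω, Z ω)) (a, c) with hPXZ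
  set PYZ : B → C → ℝ := fun b c => rvDist p (fun ω => (Y ω, Z ω)) (b, c) with hPYZ
  set PZ : C → ℝ := fun c => rvDist p Z c with hPZ
  have hF0 : ∀ a b c, 0 ≤ F a b c := fun a b c => rvDist_nonneg p hp _ _
  have hPXZ0 : ∀ a c, 0 ≤ PXZ a c := fun a c => rvDist_nonneg p hp _ _
  have hPYZ0 : ∀ b c, 0 ≤ PYZ b c := fun b c => rvDist_nonneg p hp _ _
  have hPZ0 : ∀ c, 0 ≤ PZ c := fun c => rvDist_nonneg p hp _ _
  -- marginals
  have hXZ : ∀ a c, PXZ a c = ∑ b, F a b c := by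
    intro a c
    have h1 := rvDist_marg p (fun ω => (X ω, Z ω)) Y (a, c)
    have h2 : ∀ b : B, rvDist p (fun ω => ((X ω, Z ω), Y ω)) ((a, c), b) = F a b c := by
      intro b
      exact rvDist_comp p (fun t : A × B × C => ((t.1, t.2.2), t.2.1))
        (fun s t h => by
          simp only [Prod.mk.injEq] at h
          exact Prod.ext h.1.1 (Prod.ext h.2 h.1.2))
        (fun ω => (X ω, Y ω, Z ω)) (a, b, c)
    exact h1.trans (Finset.sum_congr rfl fun b _ => h2 b)
  have hYZ : ∀ b c, PYZ b c = ∑ a, F a b c := by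
    intro b c
    have h1 := rvDist_marg p (fun ω => (Y ω, Z ω)) X (b, c)
    have h2 : ∀ a : A, rvDist p (fun ω => ((Y ω, Z ω), X ω)) ((b, c), a) = F a b c := by
      intro a
      exact rvDist_comp p (fun t : A × B × C => ((t.2.1, t.2.2), t.1))
        (fun s t h => by
          simp only [Prod.mk.injEq] at h
          exact Prod.ext h.2 (Prod.ext h.1.1 h.1.2))
        (fun ω => (X ω, Y ω, Z ω)) (a, b, c)
    exact h1.trans (Finset.sum_congr rfl fun a _ => h2 a)
  have hZX : ∀ c, PZ c = ∑ a, PXZ a c := by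
    intro c
    have h1 := rvDist_marg p Z X c
    have h2 : ∀ a : A, rvDist p (fun ω => (Z ω, X ω)) (c, a) = PXZ a c := by
      intro a
      exact rvDist_comp p (fun t : A × C => (t.2, t.1))
        (fun s t h => by
          simp only [Prod.mk.injEq] at h
          exact Prod.ext h.2 h.1)
        (fun ω => (X ω, Z ω)) (a, c)
    exact h1.trans (Finset.sum_congr rfl fun a _ => h2 a)
  have hZY : ∀ c, PZ c = ∑ b, PYZ b c := by
    intro c
    have h1 := rvDist_marg p Z Y c
    have h2 : ∀ b : B, rvDist p (fun ω => (Z ω, Y ω)) (c, b) = PYZ b c := by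
      intro b
      exact rvDist_comp p (fun t : B × C => (t.2, t.1))
        (fun s t h => by
          simp only [Prod.mk.injEq] at h
          exact Prod.ext h.2 h.1)
        (fun ω => (Y ω, Z ω)) (b, c)
    exact h1.trans (Finset.sum_congr rfl fun b _ => h2 b)
  -- pointwise bounds
  have hFXZ : ∀ a b c, F a b c ≤ PXZ a c := by
    intro a b c
    rw [hXZ]
    exact Finset.single_le_sum (fun b _ => hF0 a b c) (Finset.mem_univ b)
  have hFYZ : ∀ a b c, F a b c ≤ PYZ b c := by
    intro a b c
    rw [hYZ]
    exact Finset.single_le_sum (fun a _ => hF0 a b c) (Finset.mem_univ a)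
  have hXZZ : ∀ a c, PXZ a c ≤ PZ c := by
    intro a c
    rw [hZX]
    exact Finset.single_le_sum (fun a _ => hPXZ0 a c) (Finset.mem_univ a)
  set G : A → B → C → ℝ := fun a b c => PXZ a c * PYZ b c / PZ c with hG
  have hG0 : ∀ a b c, 0 ≤ G a b c := fun a b c =>
    div_nonneg (mul_nonneg (hPXZ0 a c) (hPYZ0 b c)) (hPZ0 c)
  -- entropy rewrites
  have eF : rvEnt p (fun ω => (X ω, Y ω, Z ω))
      = ∑ a, ∑ b, ∑ c, -(F a b c * Real.log (F a b c)) := by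
    unfold rvEnt
    rw [Fintype.sum_prod_type]
    refine Finset.sum_congr rfl fun a _ => ?_
    rw [Fintype.sum_prod_type]
    refine Finset.sum_congr rfl fun b _ => Finset.sum_congr rfl fun c _ => ?_
    show Real.negMulLog (F a b c) = _
    rw [Real.negMulLog, neg_mul]
  have eXZ : rvEnt p (fun ω => (X ω, Z ω))
      = ∑ a, ∑ b, ∑ c, -(F a b c * Real.log (PXZ a c)) := by
    unfold rvEnt
    rw [Fintype.sum_prod_type]
    refine Finset.sum_congr rfl fun a _ => ?_
    rw [Finset.sum_comm]
    refine Finset.sum_congr rfl fun c _ => ?_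
    have hsplit : ∑ b, -(F a b c * Real.log (PXZ a c))
        = Real.negMulLog (PXZ a c) := by
      simp only [← neg_mul]
      rw [← Finset.sum_mul, Finset.sum_neg_distrib, ← hXZ a c]
      simp [Real.negMulLog]
    exact hsplit.symm
  have eYZ : rvEnt p (fun ω => (Y ω, Z ω))
      = ∑ a, ∑ b, ∑ c, -(F a b c * Real.log (PYZ b c)) := by
    have step : ∑ a, ∑ b, ∑ c, -(F a b c * Real.log (PYZ b c))
        = ∑ b, ∑ c, Real.negMulLog (PYZ b c) := by
      rw [Finset.sum_comm]
      refine Finset.sum_congr rfl fun b _ => ?_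
      rw [Finset.sum_comm]
      refine Finset.sum_congr rfl fun c _ => ?_
      simp only [← neg_mul]
      rw [← Finset.sum_mul, Finset.sum_neg_distrib, ← hYZ b c]
      simp [Real.negMulLog]
    rw [step]
    unfold rvEnt
    rw [Fintype.sum_prod_type]
  have hZF : ∀ c, PZ c = ∑ a, ∑ b, F a b c := by
    intro c
    rw [hZX c]
    exact Finset.sum_congr rfl fun a _ => hXZ a c
  have eZ : rvEnt p Z = ∑ a, ∑ b, ∑ c, -(F a b c * Real.log (PZ c)) := by
    have step : ∑ a, ∑ b, ∑ c, -(F a b c * Real.log (PZ c))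
        = ∑ c, Real.negMulLog (PZ c) := by
      rw [sum_comm3]
      refine Finset.sum_congr rfl fun c _ => ?_
      simp only [← neg_mul]
      simp only [← Finset.sum_mul]
      rw [show (∑ a : A, ∑ b : B, -F a b c) = -(PZ c) by
        rw [hZF c]; simp [Finset.sum_neg_distrib]]
      simp [Real.negMulLog]
    rw [step]
    rfl
  -- pointwise Gibbs bound
  have point : ∀ a b c, F a b c - G a b c
      ≤ F a b c * Real.log (F a b c) + F a b c * Real.log (PZ c)
        - F a b c * Real.log (PXZ a c) - F a b c * Real.log (PYZ b c) := by
    intro a b c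
    rcases eq_or_lt_of_le (hF0 a b c) with h | h
    · rw [← h]
      simpa using hG0 a b c
    · have hxz : 0 < PXZ a c := lt_of_lt_of_le h (hFXZ a b c)
      have hyz : 0 < PYZ b c := lt_of_lt_of_le h (hFYZ a b c)
      have hz : 0 < PZ c := lt_of_lt_of_le hxz (hXZZ a c)
      have hGpos : 0 < G a b c := div_pos (mul_pos hxz hyz) hz
      have hlogG : Real.log (G a b c)
          = Real.log (PXZ a c) + Real.log (PYZ b c) - Real.log (PZ c) := by
        rw [hG]
        rw [Real.log_div (mul_pos hxz hyz).ne' hz.ne', Real.log_mul hxz.ne' hyz.ne']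
      have hlog2 : Real.log (G a b c) - Real.log (F a b c) ≤ G a b c / F a b c - 1 := by
        have h0 := Real.log_le_sub_one_of_pos (div_pos hGpos h)
        rwa [Real.log_div hGpos.ne' h.ne'] at h0
      have hmul : F a b c * (Real.log (G a b c) - Real.log (F a b c))
          ≤ G a b c - F a b c := by
        have h1 := mul_le_mul_of_nonneg_left hlog2 h.le
        have h2 : F a b c * (G a b c / F a b c - 1) = G a b c - F a b c := by
          field_simp
        linarith [h1, h2.le, h2.ge]
      rw [hlogG] at hmul
      nlinarith [hmul]
  -- sum of G is at most sum of F
  have sumG : ∑ a, ∑ b, ∑ c, G a b c ≤ ∑ a, ∑ b, ∑ c, F a b c := by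
    rw [sum_comm3, sum_comm3 F]
    refine Finset.sum_le_sum fun c _ => ?_
    have hFsum : (0:ℝ) ≤ ∑ a, ∑ b, F a b c :=
      Finset.sum_nonneg fun a _ => Finset.sum_nonneg fun b _ => hF0 a b c
    rcases eq_or_ne (PZ c) 0 with hc | hc
    · have hGz : ∀ a b, G a b c = 0 := by
        intro a b
        rw [hG]
        simp [hc]
      calc ∑ a, ∑ b, G a b c = 0 := by simp [hGz]
        _ ≤ _ := hFsum
    · have hfac : ∀ a, ∑ b, G a b c = PXZ a c * PZ c / PZ c := by
        intro a
        rw [show (∑ b, G a b c) = ∑ b, PXZ a c * PYZ b c / PZ c from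
          Finset.sum_congr rfl fun b _ => by rw [hG]]
        rw [← Finset.sum_div, ← Finset.mul_sum, ← hZY c]
      calc ∑ a, ∑ b, G a b c = ∑ a, PXZ a c * PZ c / PZ c :=
            Finset.sum_congr rfl fun a _ => hfac a
        _ = ∑ a, PXZ a c := Finset.sum_congr rfl fun a _ => by
            rw [mul_div_assoc, div_self hc, mul_one]
        _ = PZ c := (hZX c).symm
        _ = ∑ a, ∑ b, F a b c := hZF c
        _ ≤ ∑ a, ∑ b, F a b c := le_rfl
  -- assemble
  have key : (0:ℝ) ≤ ∑ a, ∑ b, ∑ c,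
      (F a b c * Real.log (F a b c) + F a b c * Real.log (PZ c)
        - F a b c * Real.log (PXZ a c) - F a b c * Real.log (PYZ b c)) := by
    have h1 : ∑ a, ∑ b, ∑ c, (F a b c - G a b c) ≤ ∑ a, ∑ b, ∑ c,
        (F a b c * Real.log (F a b c) + F a b c * Real.log (PZ c)
          - F a b c * Real.log (PXZ a c) - F a b c * Real.log (PYZ b c)) :=
      Finset.sum_le_sum fun a _ => Finset.sum_le_sum fun b _ =>
        Finset.sum_le_sum fun c _ => point a b c
    have h2 : ∑ a, ∑ b, ∑ c, (F a b c - G a b c)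
        = (∑ a, ∑ b, ∑ c, F a b c) - ∑ a, ∑ b, ∑ c, G a b c := by
      simp [Finset.sum_sub_distrib]
    linarith
  have expand : ∑ a, ∑ b, ∑ c,
      (F a b c * Real.log (F a b c) + F a b c * Real.log (PZ c)
        - F a b c * Real.log (PXZ a c) - F a b c * Real.log (PYZ b c))
      = (∑ a, ∑ b, ∑ c, -(F a b c * Real.log (PXZ a c)))
        + (∑ a, ∑ b, ∑ c, -(F a b c * Real.log (PYZ b c)))
        - (∑ a, ∑ b, ∑ c, -(F a b c * Real.log (F a b c)))
        - (∑ a, ∑ b, ∑ c, -(F a b c * Real.log (PZ c))) := by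
    simp only [Finset.sum_add_distrib, Finset.sum_sub_distrib, Finset.sum_neg_distrib]
    ring
  rw [eF, eXZ, eYZ, eZ]
  rw [expand] at key
  linarith

end AuxLemmas

set_option maxHeartbeats 1600000 in
theorem stmt2 {Ω A1 A2 A3 B : Type*} [Fintype Ω]
    [Fintype A1] [DecidableEq A1] [Fintype A2] [DecidableEq A2]
    [Fintype A3] [DecidableEq A3] [Fintype B] [DecidableEq B]
    (p : Ω → ℝ) (hp : ∀ ω, 0 ≤ p ω) (hsum : ∑ ω, p ω = 1)
    (X1 : Ω → A1) (X2 : Ω → A2) (X3 : Ω → A3) (Y : Ω → B)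
    (hindep : ∀ a1 a2 a3, rvDist p (fun ω => (X1 ω, X2 ω, X3 ω)) (a1, a2, a3)
      = rvDist p X1 a1 * rvDist p X2 a2 * rvDist p X3 a3) :
    rvMI p (fun ω => (X1 ω, X2 ω, X3 ω)) Y
      ≤ rvCMI p X1 Y (fun ω => (X2 ω, X3 ω)) + rvCMI p X2 Y (fun ω => (X1 ω, X3 ω))
        + rvCMI p X3 Y (fun ω => (X1 ω, X2 ω)) := by
  have s1 : ∑ a, rvDist p X1 a = 1 := by rw [sum_rvDist, hsum]
  have s2 : ∑ a, rvDist p X2 a = 1 := by rw [sum_rvDist, hsum]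
  have s3 : ∑ a, rvDist p X3 a = 1 := by rw [sum_rvDist, hsum]
  -- pairwise independence
  have d23 : ∀ a2 a3, rvDist p (fun ω => (X2 ω, X3 ω)) (a2, a3)
      = rvDist p X2 a2 * rvDist p X3 a3 := by
    intro a2 a3
    have h1 := rvDist_marg p (fun ω => (X2 ω, X3 ω)) X1 (a2, a3)
    have h2 : ∀ a1, rvDist p (fun ω => ((X2 ω, X3 ω), X1 ω)) ((a2, a3), a1)
        = rvDist p (fun ω => (X1 ω, X2 ω, X3 ω)) (a1, a2, a3) := fun a1 =>
      (rvDist_comp p (fun t : (A2 × A3) × A1 => (t.2, t.1.1, t.1.2))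
        (by rintro ⟨⟨x2, x3⟩, x1⟩ ⟨⟨y2, y3⟩, y1⟩ h
            simp only [Prod.mk.injEq] at h ⊢; tauto)
        (fun ω => ((X2 ω, X3 ω), X1 ω)) ((a2, a3), a1)).symm
    calc rvDist p (fun ω => (X2 ω, X3 ω)) (a2, a3)
        = ∑ a1, rvDist p (fun ω => (X1 ω, X2 ω, X3 ω)) (a1, a2, a3) := by
          rw [h1]; exact Finset.sum_congr rfl fun a1 _ => h2 a1
      _ = ∑ a1, rvDist p X1 a1 * (rvDist p X2 a2 * rvDist p X3 a3) :=
          Finset.sum_congr rfl fun a1 _ => by rw [hindep]; ring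
      _ = rvDist p X2 a2 * rvDist p X3 a3 := by
          rw [← Finset.sum_mul, s1, one_mul]
  have d12 : ∀ a1 a2, rvDist p (fun ω => (X1 ω, X2 ω)) (a1, a2)
      = rvDist p X1 a1 * rvDist p X2 a2 := by
    intro a1 a2
    have h1 := rvDist_marg p (fun ω => (X1 ω, X2 ω)) X3 (a1, a2)
    have h2 : ∀ a3, rvDist p (fun ω => ((X1 ω, X2 ω), X3 ω)) ((a1, a2), a3)
        = rvDist p (fun ω => (X1 ω, X2 ω, X3 ω)) (a1, a2, a3) := fun a3 =>
      (rvDist_comp p (fun t : (A1 × A2) × A3 => (t.1.1, t.1.2, t.2))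
        (by rintro ⟨⟨x1, x2⟩, x3⟩ ⟨⟨y1, y2⟩, y3⟩ h
            simp only [Prod.mk.injEq] at h ⊢; tauto)
        (fun ω => ((X1 ω, X2 ω), X3 ω)) ((a1, a2), a3)).symm
    calc rvDist p (fun ω => (X1 ω, X2 ω)) (a1, a2)
        = ∑ a3, rvDist p (fun ω => (X1 ω, X2 ω, X3 ω)) (a1, a2, a3) := by
          rw [h1]; exact Finset.sum_congr rfl fun a3 _ => h2 a3
      _ = ∑ a3, rvDist p X3 a3 * (rvDist p X1 a1 * rvDist p X2 a2) :=
          Finset.sum_congr rfl fun a3 _ => by rw [hindep]; ring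
      _ = rvDist p X1 a1 * rvDist p X2 a2 := by
          rw [← Finset.sum_mul, s3, one_mul]
  have d13 : ∀ a1 a3, rvDist p (fun ω => (X1 ω, X3 ω)) (a1, a3)
      = rvDist p X1 a1 * rvDist p X3 a3 := by
    intro a1 a3
    have h1 := rvDist_marg p (fun ω => (X1 ω, X3 ω)) X2 (a1, a3)
    have h2 : ∀ a2, rvDist p (fun ω => ((X1 ω, X3 ω), X2 ω)) ((a1, a3), a2)
        = rvDist p (fun ω => (X1 ω, X2 ω, X3 ω)) (a1, a2, a3) := fun a2 =>
      (rvDist_comp p (fun t : (A1 × A3) × A2 => (t.1.1, t.2, t.1.2))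
        (by rintro ⟨⟨x1, x3⟩, x2⟩ ⟨⟨y1, y3⟩, y2⟩ h
            simp only [Prod.mk.injEq] at h ⊢; tauto)
        (fun ω => ((X1 ω, X3 ω), X2 ω)) ((a1, a3), a2)).symm
    calc rvDist p (fun ω => (X1 ω, X3 ω)) (a1, a3)
        = ∑ a2, rvDist p (fun ω => (X1 ω, X2 ω, X3 ω)) (a1, a2, a3) := by
          rw [h1]; exact Finset.sum_congr rfl fun a2 _ => h2 a2
      _ = ∑ a2, rvDist p X2 a2 * (rvDist p X1 a1 * rvDist p X3 a3) :=
          Finset.sum_congr rfl fun a2 _ => by rw [hindep]; ring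
      _ = rvDist p X1 a1 * rvDist p X3 a3 := by
          rw [← Finset.sum_mul, s2, one_mul]
  -- entropy additivity
  have hI23 : rvEnt p (fun ω => (X2 ω, X3 ω)) = rvEnt p X2 + rvEnt p X3 :=
    rvEnt_pair_indep p hsum X2 X3 d23
  have hI12 : rvEnt p (fun ω => (X1 ω, X2 ω)) = rvEnt p X1 + rvEnt p X2 :=
    rvEnt_pair_indep p hsum X1 X2 d12
  have hI13 : rvEnt p (fun ω => (X1 ω, X3 ω)) = rvEnt p X1 + rvEnt p X3 :=
    rvEnt_pair_indep p hsum X1 X3 d13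
  have hI123 : rvEnt p (fun ω => (X1 ω, X2 ω, X3 ω))
      = rvEnt p X1 + rvEnt p X2 + rvEnt p X3 := by
    have hT : ∀ (a : A1) (b : A2 × A3),
        rvDist p (fun ω => (X1 ω, (X2 ω, X3 ω))) (a, b)
          = rvDist p X1 a * rvDist p (fun ω => (X2 ω, X3 ω)) b := by
      rintro a ⟨a2, a3⟩
      rw [hindep a a2 a3, d23]
      ring
    have h := rvEnt_pair_indep p hsum X1 (fun ω => (X2 ω, X3 ω)) hT
    rw [h, hI23]
    ring
  -- relabeling equalities
  have hA : rvEnt p (fun ω => (X1 ω, Y ω, (X2 ω, X3 ω)))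
      = rvEnt p (fun ω => ((X1 ω, X2 ω, X3 ω), Y ω)) :=
    (rvEnt_comp p (fun t : A1 × B × A2 × A3 => ((t.1, t.2.2.1, t.2.2.2), t.2.1))
      (by rintro ⟨x1, b, x2, x3⟩ ⟨y1, b', y2, y3⟩ h
          simp only [Prod.mk.injEq] at h ⊢; tauto)
      (fun ω => (X1 ω, Y ω, (X2 ω, X3 ω)))).symm
  have hB : rvEnt p (fun ω => (X2 ω, (X1 ω, X3 ω)))
      = rvEnt p (fun ω => (X1 ω, X2 ω, X3 ω)) :=
    rvEnt_comp p (fun t : A1 × A2 × A3 => (t.2.1, (t.1, t.2.2)))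
      (by rintro ⟨x1, x2, x3⟩ ⟨y1, y2, y3⟩ h
          simp only [Prod.mk.injEq] at h ⊢; tauto)
      (fun ω => (X1 ω, X2 ω, X3 ω))
  have hC : rvEnt p (fun ω => (X2 ω, Y ω, (X1 ω, X3 ω)))
      = rvEnt p (fun ω => ((X1 ω, X2 ω, X3 ω), Y ω)) :=
    (rvEnt_comp p (fun t : A2 × B × A1 × A3 => ((t.2.2.1, t.1, t.2.2.2), t.2.1))
      (by rintro ⟨x2, b, x1, x3⟩ ⟨y2, b', y1, y3⟩ h
          simp only [Prod.mk.injEq] at h ⊢; tauto)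
      (fun ω => (X2 ω, Y ω, (X1 ω, X3 ω)))).symm
  have hD : rvEnt p (fun ω => (X3 ω, (X1 ω, X2 ω)))
      = rvEnt p (fun ω => (X1 ω, X2 ω, X3 ω)) :=
    rvEnt_comp p (fun t : A1 × A2 × A3 => (t.2.2, (t.1, t.2.1)))
      (by rintro ⟨x1, x2, x3⟩ ⟨y1, y2, y3⟩ h
          simp only [Prod.mk.injEq] at h ⊢; tauto)
      (fun ω => (X1 ω, X2 ω, X3 ω))
  have hE : rvEnt p (fun ω => (X3 ω, Y ω, (X1 ω, X2 ω)))
      = rvEnt p (fun ω => ((X1 ω, X2 ω, X3 ω), Y ω)) :=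
    (rvEnt_comp p (fun t : A3 × B × A1 × A2 => ((t.2.2.1, t.2.2.2, t.1), t.2.1))
      (by rintro ⟨x3, b, x1, x2⟩ ⟨y3, b', y1, y2⟩ h
          simp only [Prod.mk.injEq] at h ⊢; tauto)
      (fun ω => (X3 ω, Y ω, (X1 ω, X2 ω)))).symm
  have hF : rvEnt p (fun ω => (X2 ω, (X1 ω, Y ω)))
      = rvEnt p (fun ω => (Y ω, (X1 ω, X2 ω))) :=
    rvEnt_comp p (fun t : B × A1 × A2 => (t.2.2, (t.2.1, t.1)))
      (by rintro ⟨b, x1, x2⟩ ⟨b', y1, y2⟩ h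
          simp only [Prod.mk.injEq] at h ⊢; tauto)
      (fun ω => (Y ω, (X1 ω, X2 ω)))
  have hG : rvEnt p (fun ω => (X3 ω, (X1 ω, Y ω)))
      = rvEnt p (fun ω => (Y ω, (X1 ω, X3 ω))) :=
    rvEnt_comp p (fun t : B × A1 × A3 => (t.2.2, (t.2.1, t.1)))
      (by rintro ⟨b, x1, x3⟩ ⟨b', y1, y3⟩ h
          simp only [Prod.mk.injEq] at h ⊢; tauto)
      (fun ω => (Y ω, (X1 ω, X3 ω)))
  have hH : rvEnt p (fun ω => (X2 ω, X3 ω, (X1 ω, Y ω)))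
      = rvEnt p (fun ω => ((X1 ω, X2 ω, X3 ω), Y ω)) :=
    (rvEnt_comp p (fun t : A1 × A2 × A3 × B => (t.2.1, t.2.2.1, t.1, t.2.2.2))
      (by rintro ⟨x1, x2, x3, b⟩ ⟨y1, y2, y3, b'⟩ h
          simp only [Prod.mk.injEq] at h ⊢; tauto)
      (fun ω => (X1 ω, X2 ω, X3 ω, Y ω))).trans
    (rvEnt_comp p (fun t : A1 × A2 × A3 × B => ((t.1, t.2.1, t.2.2.1), t.2.2.2))
      (by rintro ⟨x1, x2, x3, b⟩ ⟨y1, y2, y3, b'⟩ h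
          simp only [Prod.mk.injEq] at h ⊢; tauto)
      (fun ω => (X1 ω, X2 ω, X3 ω, Y ω))).symm
  have hII : rvEnt p (fun ω => ((X2 ω, X3 ω), Y ω))
      = rvEnt p (fun ω => (Y ω, (X2 ω, X3 ω))) :=
    rvEnt_comp p (fun t : B × A2 × A3 => (t.2, t.1))
      (by rintro ⟨b, x2, x3⟩ ⟨b', y2, y3⟩ h
          simp only [Prod.mk.injEq] at h ⊢; tauto)
      (fun ω => (Y ω, (X2 ω, X3 ω)))
  have hJ : rvEnt p (fun ω => (X1 ω, (X2 ω, X3 ω), Y ω))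
      = rvEnt p (fun ω => ((X1 ω, X2 ω, X3 ω), Y ω)) :=
    (rvEnt_comp p (fun t : A1 × (A2 × A3) × B => ((t.1, t.2.1.1, t.2.1.2), t.2.2))
      (by rintro ⟨x1, ⟨x2, x3⟩, b⟩ ⟨y1, ⟨y2, y3⟩, b'⟩ h
          simp only [Prod.mk.injEq] at h ⊢; tauto)
      (fun ω => (X1 ω, (X2 ω, X3 ω), Y ω))).symm
  -- submodularity instances
  have sub1 := rvEnt_submodular p hp X2 X3 (fun ω => (X1 ω, Y ω))
  have sub2 := rvEnt_submodular p hp X1 (fun ω => (X2 ω, X3 ω)) Y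
  simp only [rvMI, rvCMI] at *
  linarith
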